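/- Let N, l ≥ 1 be natural numbers. If every subset A of C_N = {0,1,-1}^N ⊆ ℤ^N containing all standard basis vectors and symmetric admits a subset of cardinality l that is difference-free with respect to A, then every subset A' of C_{N+1} containing all standard basis vectors and symmetric admits a subset of cardinality l+1 that is difference-free with respect to A'. -/
import Mathlib

private lemma snoc_sub {N : ℕ} (a b : Fin N → ℤ) (s t : ℤ) :
    Fin.snoc a s - Fin.snoc b t = (Fin.snoc (a - b) (s - t) : Fin (N+1) → ℤ) := by
  funext i
  refine Fin.lastCases ?_ ?_ i <;> simp

private lemma snoc_neg {N : ℕ} (a : Fin N → ℤ) (s : ℤ) :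
    -(Fin.snoc a s : Fin (N+1) → ℤ) = Fin.snoc (-a) (-s) := by
  funext i
  refine Fin.lastCases ?_ ?_ i <;> simp

private lemma single_last {N : ℕ} :
    (Pi.single (Fin.last N) (1:ℤ) : Fin (N+1) → ℤ) = Fin.snoc (0 : Fin N → ℤ) 1 := by
  funext i
  refine Fin.lastCases ?_ ?_ i
  · simp
  · intro j
    simp [Pi.single_apply, (Fin.castSucc_lt_last j).ne]

private lemma single_castSucc {N : ℕ} (k : Fin N) :
    (Pi.single (Fin.castSucc k) (1:ℤ) : Fin (N+1) → ℤ) = Fin.snoc (Pi.single k 1) 0 := by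
  funext i
  refine Fin.lastCases ?_ ?_ i
  · simp [Pi.single_apply, (Fin.castSucc_lt_last k).ne']
  · intro j
    simp [Pi.single_apply, Fin.castSucc_inj]

/-- **Corollary 2.6 (a).** If `N → l` then `N + 1 → l + 1`: if every symmetric subset of the
cube `{0,1,-1}^N` containing all basis vectors admits a difference-free subset of size `l`,
then every such subset of `{0,1,-1}^{N+1}` admits a difference-free subset of size `l + 1`. -/
theorem arrow_succ (N l : ℕ) (hN : 1 ≤ N) (hl : 1 ≤ l)
    (H : ∀ A : Set (Fin N → ℤ), A ⊆ {v | ∀ i, v i ∈ ({0, 1, -1} : Set ℤ)} →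
      (∀ k : Fin N, Pi.single k (1 : ℤ) ∈ A) → (∀ v ∈ A, -v ∈ A) →
      ∃ B : Finset (Fin N → ℤ), ↑B ⊆ A ∧ B.card = l ∧
        ∀ u ∈ B, ∀ v ∈ B, u ≠ v → u - v ∉ A) :
    ∀ A' : Set (Fin (N + 1) → ℤ), A' ⊆ {v | ∀ i, v i ∈ ({0, 1, -1} : Set ℤ)} →
      (∀ k : Fin (N + 1), Pi.single k (1 : ℤ) ∈ A') → (∀ v ∈ A', -v ∈ A') →
      ∃ B : Finset (Fin (N + 1) → ℤ), ↑B ⊆ A' ∧ B.card = l + 1 ∧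
        ∀ u ∈ B, ∀ v ∈ B, u ≠ v → u - v ∉ A' := by
  classical
  intro A' hC hbasis hsymm
  set A : Set (Fin N → ℤ) := {v | ∃ ε : ℤ, Fin.snoc v ε ∈ A'} with hA
  obtain ⟨B, hBsub, hBcard, hBdf⟩ := H A
    (by
      rintro v ⟨ε, hv⟩ i
      have := hC hv (Fin.castSucc i)
      simpa using this)
    (fun k => ⟨0, by rw [← single_castSucc]; exact hbasis _⟩)
    (by
      rintro v ⟨ε, hv⟩
      exact ⟨-ε, by rw [← snoc_neg]; exact hsymm _ hv⟩)
  set eps : (Fin N → ℤ) → ℤ := fun b =>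
    if Fin.snoc b (-1) ∈ A' then -1 else if Fin.snoc b 0 ∈ A' then 0 else 1 with heps
  set lift : (Fin N → ℤ) → (Fin (N+1) → ℤ) := fun b => Fin.snoc b (eps b) with hlift
  have hmem : ∀ b ∈ A, lift b ∈ A' := by
    rintro b ⟨ε, hb⟩
    have hε : ε = 0 ∨ ε = 1 ∨ ε = -1 := by
      have := hC hb (Fin.last N); simpa using this
    simp only [hlift, heps]
    split_ifs with h1 h2
    · exact h1
    · exact h2
    · rcases hε with rfl | rfl | rfl
      · exact absurd hb h2
      · exact hb
      · exact absurd hb h1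
  have key : ∀ b : Fin N → ℤ, Fin.snoc (-b) (1 - eps b) ∉ A' ∧ Fin.snoc b (eps b - 1) ∉ A' := by
    intro b
    simp only [heps]
    split_ifs with h1 h2
    · constructor
      · intro h
        have := hC h (Fin.last N)
        simp at this
      · intro h
        have := hC h (Fin.last N)
        simp at this
    · constructor
      · intro h
        apply h1
        have := hsymm _ h
        rw [snoc_neg] at this
        simpa using this
      · simpa using h1
    · constructor
      · intro h
        apply h2
        have := hsymm _ h
        rw [snoc_neg] at this
        simpa using this
      · simpa using h2
  have hliftinj : Function.Injective lift := by
    intro b c hbc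
    have : Fin.init (lift b) = Fin.init (lift c) := by rw [hbc]
    simpa [hlift, Fin.init_snoc] using this
  set x : Fin (N+1) → ℤ := Pi.single (Fin.last N) 1 with hx
  have hxA : x ∈ A' := hbasis _
  have hxsnoc : x = Fin.snoc (0 : Fin N → ℤ) 1 := single_last
  have heps0 : eps 0 = -1 := by
    have h0 : Fin.snoc (0 : Fin N → ℤ) (-1) ∈ A' := by
      have := hsymm _ hxA
      rw [hxsnoc, snoc_neg] at this
      simpa using this
    simp only [heps, if_pos h0]
  have hxnot : x ∉ B.image lift := by
    intro hmemx
    obtain ⟨b, _, hb⟩ := Finset.mem_image.mp hmemx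
    have hb0 : b = 0 := by
      have : Fin.init (lift b) = Fin.init x := by rw [hb]
      simpa [hlift, Fin.init_snoc, hxsnoc] using this
    have : eps b = 1 := by
      have : (lift b) (Fin.last N) = x (Fin.last N) := by rw [hb]
      simpa [hlift, hxsnoc] using this
    rw [hb0, heps0] at this
    norm_num at this
  refine ⟨insert x (B.image lift), ?_, ?_, ?_⟩
  · rw [Finset.coe_insert]
    rintro u hu
    rcases hu with rfl | hu
    · exact hxA
    · obtain ⟨b, hbB, rfl⟩ := Finset.mem_image.mp (by exact_mod_cast hu)
      exact hmem b (hBsub hbB)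
  · rw [Finset.card_insert_of_notMem hxnot, Finset.card_image_of_injective _ hliftinj, hBcard]
  · intro u hu v hv huv
    rcases Finset.mem_insert.mp hu with rfl | hu
    · rcases Finset.mem_insert.mp hv with rfl | hv
      · exact absurd rfl huv
      · obtain ⟨b, hbB, rfl⟩ := Finset.mem_image.mp hv
        rw [hxsnoc]
        simp only [hlift]
        rw [snoc_sub, zero_sub]
        exact (key b).1
    · obtain ⟨b, hbB, rfl⟩ := Finset.mem_image.mp hu
      rcases Finset.mem_insert.mp hv with rfl | hv
      · rw [hxsnoc]
        simp only [hlift]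
        rw [snoc_sub, sub_zero]
        exact (key b).2
      · obtain ⟨c, hcB, rfl⟩ := Finset.mem_image.mp hv
        have hbc : b ≠ c := fun h => huv (by rw [h])
        intro hmem'
        simp only [hlift] at hmem'
        rw [snoc_sub] at hmem'
        exact hBdf b hbB c hcB hbc ⟨_, hmem'⟩
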